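/- arXiv:2504.06350 — 2 statements merged into one kernel-verified Lean document; each statement's English description precedes it below -/
import Mathlib

section
/- Consider a short-range quantum (SRQ) strategy in a routed Bell experiment: a density matrix ρ on ℂ^{d_A} ⊗ ℂ^{d_B}; binary observables A₀, A₁ on ℂ^{d_A} and B₀, B₁ on ℂ^{d_B} (Hermitian with square the identity); a finite set Λ; positive semidefinite d_A×d_A matrices {N_λ}_{λ∈Λ} with Σ_λ N_λ = I; and real numbers a(x,λ) ∈ [−1,1] for x ∈ {0,1}, λ ∈ Λ. Define the short-path CHSH value S₀ = Tr[ρ(A₀⊗(B₀+B₁) + A₁⊗(B₀−B₁))] and the long-path quantity J₁ = Σ_{λ∈Λ} ( a(1,λ)·Tr[ρ(N_λ⊗B₀)] + a(0,λ)·Tr[ρ(N_λ⊗B₁)] ). If 2 ≤ S₀ ≤ 2√2, then J₁ ≤ (S₀ + √(8 − S₀²))/2. -/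
/-!
Write `⟨X⟩ = Re Tr (ρ X)`, `K = B₀B₁ + B₁B₀` and `L = B₀B₁ - B₁B₀`. Since `(X, Y) ↦ Tr (ρ Xᴴ Y)` is
a positive semidefinite sesquilinear form, Cauchy–Schwarz is available for it throughout.

The CHSH operator `S` satisfies `S² = 4 - [A₀, A₁] ⊗ L` and `[A₀, A₁][A₀, A₁]ᴴ ≤ 4`, hence
`S₀² ≤ ⟨S²⟩ = 4 - ⟨[A₀, A₁] ⊗ L⟩` and `(S₀² - 4)² ≤ 4β` with `β = ⟨1 ⊗ Lᴴ L⟩`: a large CHSH value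
forces `B₀` and `B₁` to anticommute.

On the long path the `λ`-th term of `J₁` is `⟨N_λ ⊗ G_λ⟩` with `G_λ = a(1,λ) B₀ + a(0,λ) B₁`, and
`G_λ² = (a(1,λ)² + a(0,λ)²) + a(1,λ) a(0,λ) K`. Cauchy–Schwarz in each outcome and then over `λ`
(the weights `⟨N_λ ⊗ 1⟩` sum to one) gives `J₁ ≤ √(2 + √⟨1 ⊗ K²⟩)`, and `K² + Lᴴ L = 4` turns this
into `J₁ ≤ √(2 + √(4 - β)) ≤ (S₀ + √(8 - S₀²)) / 2`.
-/

open Matrix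
open scoped Kronecker ComplexOrder

namespace Matrix

variable {l m n p α : Type*}

lemma sub_kronecker [Ring α] (A₁ A₂ : Matrix l m α) (B : Matrix n p α) :
    (A₁ - A₂) ⊗ₖ B = A₁ ⊗ₖ B - A₂ ⊗ₖ B := by
  ext; simp [sub_mul]

lemma kronecker_sub [Ring α] (A : Matrix l m α) (B₁ B₂ : Matrix n p α) :
    A ⊗ₖ (B₁ - B₂) = A ⊗ₖ B₁ - A ⊗ₖ B₂ := by
  ext; simp [mul_sub]

lemma sum_kronecker {ι : Type*} [NonUnitalNonAssocSemiring α] (s : Finset ι)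
    (A : ι → Matrix l m α) (B : Matrix n p α) :
    (∑ i ∈ s, A i) ⊗ₖ B = ∑ i ∈ s, A i ⊗ₖ B := by
  ext; simp [Matrix.sum_apply, Finset.sum_mul]

lemma ofNat_kronecker_one [NonAssocSemiring α] [DecidableEq l] [DecidableEq n] (k : ℕ)
    [k.AtLeastTwo] : (ofNat(k) : Matrix l l α) ⊗ₖ (1 : Matrix n n α) = ofNat(k) := by
  rw [← Nat.cast_ofNat (R := Matrix l l α) (n := k),
    ← Nat.cast_ofNat (R := Matrix (l × n) (l × n) α) (n := k), ← Nat.cast_one (R := Matrix n n α),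
    natCast_kronecker_natCast, mul_one]

lemma one_kronecker_ofNat [NonAssocSemiring α] [DecidableEq l] [DecidableEq n] (k : ℕ)
    [k.AtLeastTwo] : (1 : Matrix l l α) ⊗ₖ (ofNat(k) : Matrix n n α) = ofNat(k) := by
  rw [← Nat.cast_ofNat (R := Matrix n n α) (n := k),
    ← Nat.cast_ofNat (R := Matrix (l × n) (l × n) α) (n := k), ← Nat.cast_one (R := Matrix l l α),
    natCast_kronecker_natCast, one_mul]

lemma trace_mul_ofNat [Fintype m] [DecidableEq m] [CommSemiring α] (A : Matrix m m α) (k : ℕ)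
    [k.AtLeastTwo] : (A * ofNat(k)).trace = ofNat(k) * A.trace := by
  rw [← map_ofNat (algebraMap α (Matrix m m α)) k, Algebra.algebraMap_eq_smul_one,
    Matrix.mul_smul, mul_one, trace_smul, smul_eq_mul]

lemma re_trace_mul_ofNat_sub [Fintype m] [DecidableEq m] {ρ : Matrix m m ℂ} (hρtr : ρ.trace = 1)
    (k : ℕ) [k.AtLeastTwo] (X : Matrix m m ℂ) :
    (ρ * (ofNat(k) - X)).trace.re = ofNat(k) - (ρ * X).trace.re := by
  rw [mul_sub, trace_sub, Complex.sub_re, trace_mul_ofNat, hρtr, mul_one]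
  rfl

lemma IsHermitian.posSemidef_mul_self [Fintype m] [CommRing α] [PartialOrder α] [StarRing α]
    [StarOrderedRing α] {A : Matrix m m α} (hA : A.IsHermitian) : (A * A).PosSemidef := by
  simpa only [hA.eq] using posSemidef_conjTranspose_mul_self A

end Matrix

section Involutions

variable {R : Type*} [Ring R] {a b : R}

lemma add_mul_self_add_sub_mul_self (ha : a * a = 1) (hb : b * b = 1) :
    (a + b) * (a + b) + (a - b) * (a - b) = 4 := by
  have h : (a + b) * (a + b) + (a - b) * (a - b) = 2 * (a * a) + 2 * (b * b) := by noncomm_ring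
  rw [h, ha, hb]; norm_num

lemma add_mul_sub_of_mul_self_eq_one (ha : a * a = 1) (hb : b * b = 1) :
    (a + b) * (a - b) = b * a - a * b := by
  have h : (a + b) * (a - b) = a * a - b * b + (b * a - a * b) := by noncomm_ring
  rw [h, ha, hb, sub_self, zero_add]

lemma sub_mul_add_of_mul_self_eq_one (ha : a * a = 1) (hb : b * b = 1) :
    (a - b) * (a + b) = a * b - b * a := by
  have h : (a - b) * (a + b) = a * a - b * b + (a * b - b * a) := by noncomm_ring
  rw [h, ha, hb, sub_self, zero_add]

lemma anticommutator_sq_sub_commutator_sq (ha : a * a = 1) (hb : b * b = 1) :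
    (a * b + b * a) * (a * b + b * a) - (a * b - b * a) * (a * b - b * a) = 4 := by
  have h : (a * b + b * a) * (a * b + b * a) - (a * b - b * a) * (a * b - b * a)
      = 2 * (a * (b * b) * a) + 2 * (b * (a * a) * b) := by noncomm_ring
  rw [h, ha, hb, mul_one, mul_one, ha, hb]; norm_num

lemma smul_add_smul_mul_self {k : Type*} [CommRing k] [Algebra k R] (x y : k)
    (ha : a * a = 1) (hb : b * b = 1) :
    (x • a + y • b) * (x • a + y • b) = (x ^ 2 + y ^ 2) • 1 + (x * y) • (a * b + b * a) := by
  simp only [add_mul, mul_add, smul_mul_smul_comm, ha, hb]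
  module

variable [StarRing R]

lemma IsSelfAdjoint.star_commutator (ha : IsSelfAdjoint a) (hb : IsSelfAdjoint b) :
    star (a * b - b * a) = -(a * b - b * a) := by
  rw [star_sub, star_mul, star_mul, ha.star_eq, hb.star_eq, neg_sub]

lemma IsSelfAdjoint.star_commutator_mul_self_add (ha : IsSelfAdjoint a) (hb : IsSelfAdjoint b)
    (ha2 : a * a = 1) (hb2 : b * b = 1) :
    star (a * b - b * a) * (a * b - b * a) + (a * b + b * a) * (a * b + b * a) = 4 := by
  rw [ha.star_commutator hb, ← anticommutator_sq_sub_commutator_sq ha2 hb2]; noncomm_ring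

lemma IsSelfAdjoint.commutator_mul_star_self_add (ha : IsSelfAdjoint a) (hb : IsSelfAdjoint b)
    (ha2 : a * a = 1) (hb2 : b * b = 1) :
    (a * b - b * a) * star (a * b - b * a) + (a * b + b * a) * (a * b + b * a) = 4 := by
  rw [ha.star_commutator hb, ← anticommutator_sq_sub_commutator_sq ha2 hb2]; noncomm_ring

end Involutions

lemma chsh_mul_self_add {mA mB R : Type*} [Fintype mA] [Fintype mB] [DecidableEq mA]
    [DecidableEq mB] [CommRing R] {A₀ A₁ : Matrix mA mA R} {B₀ B₁ : Matrix mB mB R}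
    (hA₀ : A₀ * A₀ = 1) (hA₁ : A₁ * A₁ = 1) (hB₀ : B₀ * B₀ = 1) (hB₁ : B₁ * B₁ = 1) :
    (A₀ ⊗ₖ (B₀ + B₁) + A₁ ⊗ₖ (B₀ - B₁)) * (A₀ ⊗ₖ (B₀ + B₁) + A₁ ⊗ₖ (B₀ - B₁))
      + (A₀ * A₁ - A₁ * A₀) ⊗ₖ (B₀ * B₁ - B₁ * B₀) = 4 := by
  have expand : (A₀ ⊗ₖ (B₀ + B₁) + A₁ ⊗ₖ (B₀ - B₁)) * (A₀ ⊗ₖ (B₀ + B₁) + A₁ ⊗ₖ (B₀ - B₁))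
      = (A₀ * A₀) ⊗ₖ ((B₀ + B₁) * (B₀ + B₁)) + (A₁ * A₁) ⊗ₖ ((B₀ - B₁) * (B₀ - B₁))
        + (A₀ * A₁) ⊗ₖ ((B₀ + B₁) * (B₀ - B₁)) + (A₁ * A₀) ⊗ₖ ((B₀ - B₁) * (B₀ + B₁)) := by
    rw [add_mul, mul_add, mul_add, mul_kronecker_mul, mul_kronecker_mul, mul_kronecker_mul,
      mul_kronecker_mul]
    abel
  rw [expand, hA₀, hA₁, ← kronecker_add, add_mul_self_add_sub_mul_self hB₀ hB₁,
    one_kronecker_ofNat, add_mul_sub_of_mul_self_eq_one hB₀ hB₁,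
    sub_mul_add_of_mul_self_eq_one hB₀ hB₁]
  simp only [kronecker_sub, sub_kronecker]
  abel

lemma Complex.sq_re_le_of_norm_le_sqrt_mul_sqrt {z : ℂ} {u v : ℝ} (hu : 0 ≤ u) (hv : 0 ≤ v)
    (h : ‖z‖ ≤ √u * √v) : z.re ^ 2 ≤ u * v :=
  calc z.re ^ 2 ≤ ‖z‖ ^ 2 := by rw [← sq_abs]; gcongr; exact abs_re_le_norm z
    _ ≤ (√u * √v) ^ 2 := by gcongr
    _ = u * v := by rw [mul_pow, Real.sq_sqrt hu, Real.sq_sqrt hv]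

lemma Real.sum_le_sqrt_sum_of_le_sqrt_mul_sqrt {ι : Type*} (s : Finset ι) {f p q : ι → ℝ}
    (hp : ∀ i, 0 ≤ p i) (hq : ∀ i, 0 ≤ q i) (hp1 : ∑ i ∈ s, p i = 1)
    (h : ∀ i, f i ≤ √(p i) * √(q i)) : ∑ i ∈ s, f i ≤ √(∑ i ∈ s, q i) :=
  calc ∑ i ∈ s, f i ≤ ∑ i ∈ s, √(p i) * √(q i) := Finset.sum_le_sum fun i _ ↦ h i
    _ ≤ √(∑ i ∈ s, p i) * √(∑ i ∈ s, q i) := Real.sum_sqrt_mul_sqrt_le s hp hq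
    _ = √(∑ i ∈ s, q i) := by rw [hp1, Real.sqrt_one, one_mul]

namespace Matrix.PosSemidef

section State

variable {m : Type*} [Fintype m] {ρ X : Matrix m m ℂ}

lemma norm_trace_mul_conjTranspose_mul_le (hρ : ρ.PosSemidef) (X Y : Matrix m m ℂ) :
    ‖(ρ * (Xᴴ * Y)).trace‖ ≤ √(ρ * (Xᴴ * X)).trace.re * √(ρ * (Yᴴ * Y)).trace.re := by
  let _ := ρ.toMatrixSeminormedAddCommGroup hρ
  let _ := ρ.toMatrixInnerProductSpace hρ
  have trace_eq_inner (Z W : Matrix m m ℂ) : (ρ * (Zᴴ * W)).trace = inner ℂ Z W := by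
    rw [← mul_assoc, trace_mul_cycle]; rfl
  simp only [trace_eq_inner]
  exact norm_inner_le_norm X Y

variable [DecidableEq m]

lemma re_trace_mul_nonneg (hρ : ρ.PosSemidef) (hX : X.PosSemidef) : 0 ≤ (ρ * X).trace.re := by
  open MatrixOrder in
  obtain ⟨B, rfl⟩ := CStarAlgebra.nonneg_iff_eq_star_mul_self.mp hX.nonneg
  rw [star_eq_conjTranspose, ← mul_assoc, trace_mul_cycle]
  exact (RCLike.nonneg_iff.mp (hρ.mul_mul_conjTranspose_same B).trace_nonneg).1

lemma sq_re_trace_mul_le (hρ : ρ.PosSemidef) (hρtr : ρ.trace = 1) (hX : X.IsHermitian) :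
    (ρ * X).trace.re ^ 2 ≤ (ρ * (X * X)).trace.re := by
  have hCS := hρ.norm_trace_mul_conjTranspose_mul_le 1 X
  simp only [conjTranspose_one, one_mul, mul_one, hX.eq, hρtr] at hCS
  simpa using Complex.sq_re_le_of_norm_le_sqrt_mul_sqrt zero_le_one
    (hρ.re_trace_mul_nonneg hX.posSemidef_mul_self) (by simpa using hCS)

end State

section Bipartite

variable {mA mB : Type*} [Fintype mA] [Fintype mB] [DecidableEq mA] [DecidableEq mB]
  {ρ : Matrix (mA × mB) (mA × mB) ℂ}

lemma norm_trace_mul_kronecker_le (hρ : ρ.PosSemidef) {N : Matrix mA mA ℂ} (hN : N.PosSemidef)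
    (X : Matrix mB mB ℂ) :
    ‖(ρ * (N ⊗ₖ X)).trace‖ ≤
      √(ρ * (N ⊗ₖ 1)).trace.re * √(ρ * (N ⊗ₖ (Xᴴ * X))).trace.re := by
  open MatrixOrder in
  obtain ⟨hR, hRR⟩ : (CFC.sqrt N)ᴴ = CFC.sqrt N ∧ CFC.sqrt N * CFC.sqrt N = N :=
    ⟨(CFC.sqrt_nonneg N).posSemidef.isHermitian, CFC.sqrt_mul_sqrt_self N hN.nonneg⟩
  have h := hρ.norm_trace_mul_conjTranspose_mul_le (CFC.sqrt N ⊗ₖ 1) (CFC.sqrt N ⊗ₖ X)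
  simpa only [conjTranspose_kronecker, ← mul_kronecker_mul, hR, hRR, conjTranspose_one, one_mul,
    mul_one] using h

lemma sq_re_trace_mul_kronecker_le (hρ : ρ.PosSemidef) (Q : Matrix mA mA ℂ)
    (L : Matrix mB mB ℂ) :
    (ρ * (Q ⊗ₖ L)).trace.re ^ 2 ≤
      (ρ * ((Q * Qᴴ) ⊗ₖ 1)).trace.re * (ρ * (1 ⊗ₖ (Lᴴ * L))).trace.re := by
  have h := hρ.norm_trace_mul_conjTranspose_mul_le (Qᴴ ⊗ₖ 1) (1 ⊗ₖ L)
  simp only [conjTranspose_kronecker, ← mul_kronecker_mul, conjTranspose_conjTranspose,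
    conjTranspose_one, one_mul, mul_one] at h
  exact Complex.sq_re_le_of_norm_le_sqrt_mul_sqrt
    (hρ.re_trace_mul_nonneg ((posSemidef_self_mul_conjTranspose Q).kronecker .one))
    (hρ.re_trace_mul_nonneg (PosSemidef.one.kronecker (posSemidef_conjTranspose_mul_self L))) h

end Bipartite

end Matrix.PosSemidef

section CHSH

variable {mA mB : Type*} [Fintype mA] [Fintype mB] [DecidableEq mA] [DecidableEq mB]
  {ρ : Matrix (mA × mB) (mA × mB) ℂ} {A₀ A₁ : Matrix mA mA ℂ} {B₀ B₁ : Matrix mB mB ℂ}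

lemma sq_chsh_le (hρ : ρ.PosSemidef) (hρtr : ρ.trace = 1) (hA₀ : A₀.IsHermitian)
    (hA₁ : A₁.IsHermitian) (hA₀2 : A₀ * A₀ = 1) (hA₁2 : A₁ * A₁ = 1) (hB₀ : B₀.IsHermitian)
    (hB₁ : B₁.IsHermitian) (hB₀2 : B₀ * B₀ = 1) (hB₁2 : B₁ * B₁ = 1) :
    (ρ * (A₀ ⊗ₖ (B₀ + B₁) + A₁ ⊗ₖ (B₀ - B₁))).trace.re ^ 2 ≤
      4 - (ρ * ((A₀ * A₁ - A₁ * A₀) ⊗ₖ (B₀ * B₁ - B₁ * B₀))).trace.re := by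
  have hS : (A₀ ⊗ₖ (B₀ + B₁) + A₁ ⊗ₖ (B₀ - B₁)).IsHermitian := by
    simp only [IsHermitian, conjTranspose_add, conjTranspose_sub, conjTranspose_kronecker,
      hA₀.eq, hA₁.eq, hB₀.eq, hB₁.eq]
  refine (hρ.sq_re_trace_mul_le hρtr hS).trans_eq ?_
  rw [eq_sub_of_add_eq (chsh_mul_self_add hA₀2 hA₁2 hB₀2 hB₁2), re_trace_mul_ofNat_sub hρtr]

lemma sq_re_trace_commutator_kronecker_le (hρ : ρ.PosSemidef) (hρtr : ρ.trace = 1)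
    (hA₀ : A₀.IsHermitian) (hA₁ : A₁.IsHermitian) (hA₀2 : A₀ * A₀ = 1) (hA₁2 : A₁ * A₁ = 1)
    (L : Matrix mB mB ℂ) :
    (ρ * ((A₀ * A₁ - A₁ * A₀) ⊗ₖ L)).trace.re ^ 2 ≤ 4 * (ρ * (1 ⊗ₖ (Lᴴ * L))).trace.re := by
  set Q := A₀ * A₁ - A₁ * A₀
  set P := A₀ * A₁ + A₁ * A₀
  have hP : P.IsHermitian := by
    simp only [P, IsHermitian, conjTranspose_add, conjTranspose_mul, hA₀.eq, hA₁.eq, add_comm]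
  have hQP : Q * Qᴴ + P * P = 4 :=
    hA₀.isSelfAdjoint.commutator_mul_star_self_add hA₁.isSelfAdjoint hA₀2 hA₁2
  have hQ4 : (ρ * ((Q * Qᴴ) ⊗ₖ 1)).trace.re ≤ 4 := by
    have h := hρ.re_trace_mul_nonneg (hP.posSemidef_mul_self.kronecker (.one (n := mB)))
    rw [eq_sub_of_add_eq' hQP, sub_kronecker, ofNat_kronecker_one,
      re_trace_mul_ofNat_sub hρtr] at h
    linarith
  have hL := hρ.re_trace_mul_nonneg (PosSemidef.one.kronecker (posSemidef_conjTranspose_mul_self L))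
  exact (hρ.sq_re_trace_mul_kronecker_le Q L).trans (by gcongr)

lemma sq_sq_chsh_sub_four_le (hρ : ρ.PosSemidef) (hρtr : ρ.trace = 1) (hA₀ : A₀.IsHermitian)
    (hA₁ : A₁.IsHermitian) (hA₀2 : A₀ * A₀ = 1) (hA₁2 : A₁ * A₁ = 1) (hB₀ : B₀.IsHermitian)
    (hB₁ : B₁.IsHermitian) (hB₀2 : B₀ * B₀ = 1) (hB₁2 : B₁ * B₁ = 1)
    (hS : 2 ≤ (ρ * (A₀ ⊗ₖ (B₀ + B₁) + A₁ ⊗ₖ (B₀ - B₁))).trace.re) :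
    ((ρ * (A₀ ⊗ₖ (B₀ + B₁) + A₁ ⊗ₖ (B₀ - B₁))).trace.re ^ 2 - 4) ^ 2 ≤
      4 * (ρ * (1 ⊗ₖ ((B₀ * B₁ - B₁ * B₀)ᴴ * (B₀ * B₁ - B₁ * B₀)))).trace.re := by
  have hS2 := sq_chsh_le hρ hρtr hA₀ hA₁ hA₀2 hA₁2 hB₀ hB₁ hB₀2 hB₁2
  set S := (ρ * (A₀ ⊗ₖ (B₀ + B₁) + A₁ ⊗ₖ (B₀ - B₁))).trace.re
  set t := (ρ * ((A₀ * A₁ - A₁ * A₀) ⊗ₖ (B₀ * B₁ - B₁ * B₀))).trace.re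
  have h0 : 0 ≤ S ^ 2 - 4 := by nlinarith
  calc (S ^ 2 - 4) ^ 2 ≤ (-t) ^ 2 := pow_le_pow_left₀ h0 (by linarith) 2
    _ = t ^ 2 := neg_sq t
    _ ≤ _ := sq_re_trace_commutator_kronecker_le hρ hρtr hA₀ hA₁ hA₀2 hA₁2 _

end CHSH

section LongPath

variable {mA mB : Type*} [Fintype mA] [Fintype mB] [DecidableEq mA] [DecidableEq mB]
  {ρ : Matrix (mA × mB) (mA × mB) ℂ} {N : Matrix mA mA ℂ} {B₀ B₁ : Matrix mB mB ℂ}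

lemma re_trace_mul_kronecker_smul_add_smul (x y : ℝ) (X Y : Matrix mB mB ℂ) :
    (ρ * (N ⊗ₖ (x • X + y • Y))).trace.re =
      x * (ρ * (N ⊗ₖ X)).trace.re + y * (ρ * (N ⊗ₖ Y)).trace.re := by
  rw [kronecker_add, kronecker_smul, kronecker_smul, mul_add, Matrix.mul_smul, Matrix.mul_smul,
    trace_add, trace_smul, trace_smul, Complex.add_re, Complex.smul_re, Complex.smul_re,
    smul_eq_mul, smul_eq_mul]

lemma abs_re_trace_mul_kronecker_le (hρ : ρ.PosSemidef) (hN : N.PosSemidef)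
    {K : Matrix mB mB ℂ} (hK : K.IsHermitian) :
    |(ρ * (N ⊗ₖ K)).trace.re| ≤
      √(ρ * (N ⊗ₖ 1)).trace.re * √(ρ * (N ⊗ₖ (K * K))).trace.re := by
  simpa only [hK.eq] using (Complex.abs_re_le_norm _).trans (hρ.norm_trace_mul_kronecker_le hN K)

lemma re_trace_mul_kronecker_smul_add_smul_le (hρ : ρ.PosSemidef) (hN : N.PosSemidef)
    (hB₀ : B₀.IsHermitian) (hB₁ : B₁.IsHermitian) (hB₀2 : B₀ * B₀ = 1) (hB₁2 : B₁ * B₁ = 1)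
    {x y : ℝ} (hx : x ∈ Set.Icc (-1 : ℝ) 1) (hy : y ∈ Set.Icc (-1 : ℝ) 1) :
    x * (ρ * (N ⊗ₖ B₀)).trace.re + y * (ρ * (N ⊗ₖ B₁)).trace.re ≤
      √(ρ * (N ⊗ₖ 1)).trace.re *
        √(2 * (ρ * (N ⊗ₖ 1)).trace.re + |(ρ * (N ⊗ₖ (B₀ * B₁ + B₁ * B₀))).trace.re|) := by
  set G := x • B₀ + y • B₁
  set p := (ρ * (N ⊗ₖ 1)).trace.re
  set k := (ρ * (N ⊗ₖ (B₀ * B₁ + B₁ * B₀))).trace.re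
  have hG : Gᴴ = G := by
    simp only [G, conjTranspose_add, conjTranspose_smul, hB₀.eq, hB₁.eq, star_trivial]
  have hp : 0 ≤ p := hρ.re_trace_mul_nonneg (hN.kronecker .one)
  have hGG : (ρ * (N ⊗ₖ (Gᴴ * G))).trace.re ≤ 2 * p + |k| := by
    rw [hG, smul_add_smul_mul_self x y hB₀2 hB₁2, re_trace_mul_kronecker_smul_add_smul]
    change (x ^ 2 + y ^ 2) * p + x * y * k ≤ 2 * p + |k|
    have hxy : |x * y| ≤ 1 := by
      rw [abs_mul]; exact mul_le_one₀ (abs_le.mpr hx) (abs_nonneg y) (abs_le.mpr hy)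
    have hsq : (x ^ 2 + y ^ 2) * p ≤ 2 * p := by
      have : x ^ 2 + y ^ 2 ≤ 2 := by nlinarith [hx.1, hx.2, hy.1, hy.2]
      nlinarith
    have hk : x * y * k ≤ |k| := (le_abs_self _).trans <| by
      rw [abs_mul]; exact mul_le_of_le_one_left (abs_nonneg k) hxy
    linarith
  calc x * (ρ * (N ⊗ₖ B₀)).trace.re + y * (ρ * (N ⊗ₖ B₁)).trace.re
      = (ρ * (N ⊗ₖ G)).trace.re := (re_trace_mul_kronecker_smul_add_smul x y B₀ B₁).symm
    _ ≤ ‖(ρ * (N ⊗ₖ G)).trace‖ := Complex.re_le_norm _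
    _ ≤ √p * √(ρ * (N ⊗ₖ (Gᴴ * G))).trace.re := hρ.norm_trace_mul_kronecker_le hN G
    _ ≤ √p * √(2 * p + |k|) := by gcongr

end LongPath

lemma sum_re_trace_mul_kronecker_le {Λ : Type*} [Fintype Λ] {mA mB : Type*} [Fintype mA]
    [Fintype mB] [DecidableEq mA] [DecidableEq mB] {ρ : Matrix (mA × mB) (mA × mB) ℂ}
    (hρ : ρ.PosSemidef) (hρtr : ρ.trace = 1) {N : Λ → Matrix mA mA ℂ}
    (hN : ∀ l, (N l).PosSemidef) (hNsum : ∑ l, N l = 1) {B₀ B₁ : Matrix mB mB ℂ}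
    (hB₀ : B₀.IsHermitian) (hB₁ : B₁.IsHermitian) (hB₀2 : B₀ * B₀ = 1) (hB₁2 : B₁ * B₁ = 1)
    {x y : Λ → ℝ} (hx : ∀ l, x l ∈ Set.Icc (-1 : ℝ) 1) (hy : ∀ l, y l ∈ Set.Icc (-1 : ℝ) 1) :
    ∑ l, (x l * (ρ * (N l ⊗ₖ B₀)).trace.re + y l * (ρ * (N l ⊗ₖ B₁)).trace.re) ≤
      √(2 + √(ρ * (1 ⊗ₖ ((B₀ * B₁ + B₁ * B₀) * (B₀ * B₁ + B₁ * B₀)))).trace.re) := by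
  set K := B₀ * B₁ + B₁ * B₀
  have hK : K.IsHermitian := by
    simp only [K, IsHermitian, conjTranspose_add, conjTranspose_mul, hB₀.eq, hB₁.eq, add_comm]
  have hsum (X : Matrix mB mB ℂ) :
      ∑ l, (ρ * (N l ⊗ₖ X)).trace.re = (ρ * (1 ⊗ₖ X)).trace.re := by
    rw [← Complex.re_sum, ← trace_sum, ← Finset.mul_sum, ← sum_kronecker, hNsum]
  have hp (l : Λ) : 0 ≤ (ρ * (N l ⊗ₖ 1)).trace.re := hρ.re_trace_mul_nonneg ((hN l).kronecker .one)
  have hp1 : ∑ l, (ρ * (N l ⊗ₖ 1)).trace.re = 1 := by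
    rw [hsum, one_kronecker_one, mul_one, hρtr, Complex.one_re]
  have hw (l : Λ) : 0 ≤ (ρ * (N l ⊗ₖ (K * K))).trace.re :=
    hρ.re_trace_mul_nonneg ((hN l).kronecker hK.posSemidef_mul_self)
  have hk : ∑ l, |(ρ * (N l ⊗ₖ K)).trace.re| ≤ √(ρ * (1 ⊗ₖ (K * K))).trace.re := by
    rw [← hsum]
    exact Real.sum_le_sqrt_sum_of_le_sqrt_mul_sqrt _ hp hw hp1
      fun l ↦ abs_re_trace_mul_kronecker_le hρ (hN l) hK
  calc _ ≤ √(∑ l, (2 * (ρ * (N l ⊗ₖ 1)).trace.re + |(ρ * (N l ⊗ₖ K)).trace.re|)) :=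
        Real.sum_le_sqrt_sum_of_le_sqrt_mul_sqrt _ hp
          (fun l ↦ add_nonneg (mul_nonneg zero_le_two (hp l)) (abs_nonneg _)) hp1
          fun l ↦ re_trace_mul_kronecker_smul_add_smul_le hρ (hN l) hB₀ hB₁ hB₀2 hB₁2 (hx l) (hy l)
    _ ≤ _ := by
      rw [Finset.sum_add_distrib, ← Finset.mul_sum, hp1, mul_one]
      gcongr

lemma sqrt_two_add_sqrt_four_sub_le {S β : ℝ} (hS2 : 2 ≤ S) (hS8 : S ≤ 2 * √2)
    (hβ : (S ^ 2 - 4) ^ 2 ≤ 4 * β) :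
    √(2 + √(4 - β)) ≤ (S + √(8 - S ^ 2)) / 2 := by
  have h8 : 0 ≤ 8 - S ^ 2 := by
    have := Real.sq_sqrt (show (0 : ℝ) ≤ 2 by norm_num)
    nlinarith [Real.sqrt_nonneg 2]
  set r := √(8 - S ^ 2)
  have hr0 : 0 ≤ r := Real.sqrt_nonneg _
  have hr2 : r ^ 2 = 8 - S ^ 2 := Real.sq_sqrt h8
  -- `((S + r) / 2) ^ 2 = 2 + S r / 2` and `(S r / 2) ^ 2 = (16 - (S ^ 2 - 4) ^ 2) / 4`
  have hinner : √(4 - β) ≤ S * r / 2 :=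
    Real.sqrt_le_iff.mpr ⟨by positivity, by nlinarith⟩
  exact Real.sqrt_le_iff.mpr ⟨by positivity, by nlinarith⟩

/-- bound J₁ ≤ (S₀ + √(8 − S₀²))/2 for short-range quantum
strategies in a routed Bell experiment. -/
theorem routed_bell_srq_J1_bound (dA dB : ℕ) (Λ : Type*) [Fintype Λ]
    (ρ : Matrix (Fin dA × Fin dB) (Fin dA × Fin dB) ℂ)
    (hρ : ρ.PosSemidef) (hρtr : ρ.trace = 1)
    (A₀ A₁ : Matrix (Fin dA) (Fin dA) ℂ)
    (B₀ B₁ : Matrix (Fin dB) (Fin dB) ℂ)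
    (hA₀ : A₀.IsHermitian) (hA₁ : A₁.IsHermitian)
    (hA₀2 : A₀ * A₀ = 1) (hA₁2 : A₁ * A₁ = 1)
    (hB₀ : B₀.IsHermitian) (hB₁ : B₁.IsHermitian)
    (hB₀2 : B₀ * B₀ = 1) (hB₁2 : B₁ * B₁ = 1)
    (N : Λ → Matrix (Fin dA) (Fin dA) ℂ)
    (hN : ∀ l, (N l).PosSemidef) (hNsum : ∑ l, N l = 1)
    (a : Fin 2 → Λ → ℝ) (ha : ∀ x l, a x l ∈ Set.Icc (-1 : ℝ) 1) :
    let S₀ : ℝ := ((ρ * (A₀ ⊗ₖ (B₀ + B₁) + A₁ ⊗ₖ (B₀ - B₁))).trace).re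
    let J₁ : ℝ := ∑ l, (a 1 l * ((ρ * (N l ⊗ₖ B₀)).trace).re
        + a 0 l * ((ρ * (N l ⊗ₖ B₁)).trace).re)
    2 ≤ S₀ → S₀ ≤ 2 * Real.sqrt 2 → J₁ ≤ (S₀ + Real.sqrt (8 - S₀ ^ 2)) / 2 := by
  intro S₀ J₁ hS2 hS8
  have hβ := sq_sq_chsh_sub_four_le hρ hρtr hA₀ hA₁ hA₀2 hA₁2 hB₀ hB₁ hB₀2 hB₁2 hS2
  set K := B₀ * B₁ + B₁ * B₀
  set L := B₀ * B₁ - B₁ * B₀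
  have hKL : (ρ * (1 ⊗ₖ (K * K))).trace.re = 4 - (ρ * (1 ⊗ₖ (Lᴴ * L))).trace.re := by
    have h4 : Lᴴ * L + K * K = 4 :=
      hB₀.isSelfAdjoint.star_commutator_mul_self_add hB₁.isSelfAdjoint hB₀2 hB₁2
    rw [eq_sub_of_add_eq' h4, kronecker_sub, one_kronecker_ofNat, re_trace_mul_ofNat_sub hρtr]
  calc J₁ ≤ √(2 + √(ρ * (1 ⊗ₖ (K * K))).trace.re) :=
        sum_re_trace_mul_kronecker_le hρ hρtr hN hNsum hB₀ hB₁ hB₀2 hB₁2 (ha 1) (ha 0)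
    _ ≤ (S₀ + √(8 - S₀ ^ 2)) / 2 := by
      rw [hKL]
      exact sqrt_two_add_sqrt_four_sub_le hS2 hS8 hβ
end

section
/- Let α_A, α_B ≥ 0 with α_A + α_B ≥ 2. Let ρ be a density matrix on ℂ^{d_A} ⊗ ℂ^{d_B}, let A₀, A₁ be Hermitian d_A×d_A matrices with A₀² = A₁² = I, and B₀, B₁ Hermitian d_B×d_B matrices with B₀² = B₁² = I. Then Tr[ρ(A₀⊗B₀ + A₀⊗B₁ + A₁⊗B₀ − A₁⊗B₁)] + α_A·Tr[ρ(A₀⊗I)] + α_B·Tr[ρ(I⊗B₀)] ≤ 2 + α_A + α_B. -/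
open Matrix
open scoped Kronecker ComplexOrder

/-!
Write `P±(X) = (1 ± X) / 2` for the spectral projections of a binary observable. Then
`4 - 2 A₀ - CHSH = 4 (P-(A₀) P+(B₀) + P-(A₀) P+(B₁) + P+(A₁) P-(B₀) + P-(A₁) P-(B₁))`,
and a product of commuting projections `P Q = (P Q)* (P Q)` is positive, so every state
satisfies `β + 2⟨A₀⟩ ≤ 4`, and by the symmetry of CHSH also `β + 2⟨B₀⟩ ≤ 4`. Together with
`⟨A₀⟩, ⟨B₀⟩ ≤ 1` these are the extreme cases of the tilted bound, and a nonnegative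
combination of them gives `β + α_A⟨A₀⟩ + α_B⟨B₀⟩ ≤ 2 + α_A + α_B` once `α_A + α_B ≥ 2`.
-/

structure IsBinaryObservable {R : Type*} [Ring R] [StarRing R] (X : R) : Prop where
  isSelfAdjoint : IsSelfAdjoint X
  mul_self : X * X = 1

def chsh {R : Type*} [Ring R] (X₀ X₁ Y₀ Y₁ : R) : R :=
  X₀ * Y₀ + X₀ * Y₁ + X₁ * Y₀ - X₁ * Y₁

lemma chsh_comm {R : Type*} [Ring R] {X₀ X₁ Y₀ Y₁ : R} (h₀₀ : Commute X₀ Y₀)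
    (h₀₁ : Commute X₀ Y₁) (h₁₀ : Commute X₁ Y₀) (h₁₁ : Commute X₁ Y₁) :
    chsh X₀ X₁ Y₀ Y₁ = chsh Y₀ Y₁ X₀ X₁ := by
  rw [chsh, chsh, h₀₀.eq, h₀₁.eq, h₁₀.eq, h₁₁.eq]
  abel

lemma add_mul_add_mul_le_two_add_add {β a b αA αB : ℝ} (hαA : 0 ≤ αA) (hαB : 0 ≤ αB)
    (hsum : 2 ≤ αA + αB) (hβa : β + 2 * a ≤ 4) (hβb : β + 2 * b ≤ 4) (ha : a ≤ 1) (hb : b ≤ 1) :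
    β + αA * a + αB * b ≤ 2 + αA + αB := by
  rcases le_total αA 2 with hαA2 | h2αA
  · linarith [mul_le_mul_of_nonneg_left hβa hαA, mul_le_mul_of_nonneg_left hβb (sub_nonneg.2 hαA2),
      mul_le_mul_of_nonneg_left hb (sub_nonneg.2 hsum)]
  · linarith [mul_le_mul_of_nonneg_left ha (sub_nonneg.2 h2αA), mul_le_mul_of_nonneg_left hb hαB]

section StarRing

variable {R : Type*} [Ring R] [StarRing R] {X Y : R}

namespace IsBinaryObservable

lemma neg (hX : IsBinaryObservable X) : IsBinaryObservable (-X) :=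
  ⟨hX.isSelfAdjoint.neg, by rw [neg_mul_neg, hX.mul_self]⟩

lemma star_one_add_mul_self (hX : IsBinaryObservable X) :
    star (1 + X) * (1 + X) = 2 • (1 + X) := by
  have h : (1 + X) * (1 + X) = 1 + 2 • X + X * X := by noncomm_ring
  rw [star_add, star_one, hX.isSelfAdjoint.star_eq, h, hX.mul_self]
  abel

lemma star_mul_self_one_add_mul_one_add (hX : IsBinaryObservable X)
    (hY : IsBinaryObservable Y) (hXY : Commute X Y) :
    star ((1 + X) * (1 + Y)) * ((1 + X) * (1 + Y)) = 4 • ((1 + X) * (1 + Y)) := by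
  have hstar : star (1 + Y) = 1 + Y := by
    rw [star_add, star_one, hY.isSelfAdjoint.star_eq]
  have hcomm : Commute (1 + X) (1 + Y) :=
    (Commute.one_left _).add_left ((Commute.one_right _).add_right hXY)
  calc star ((1 + X) * (1 + Y)) * ((1 + X) * (1 + Y))
      = star (1 + Y) * (star (1 + X) * (1 + X)) * (1 + Y) := by
        rw [star_mul]; noncomm_ring
    _ = 2 • ((1 + X) * (star (1 + Y) * (1 + Y))) := by
        rw [hX.star_one_add_mul_self, hstar, mul_smul_comm, smul_mul_assoc, ← mul_assoc,
          hcomm.eq, mul_assoc]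
    _ = 4 • ((1 + X) * (1 + Y)) := by
        rw [hY.star_one_add_mul_self, mul_smul_comm, smul_smul]
        norm_num

end IsBinaryObservable

variable (E : R →+ ℝ) (hE : ∀ M, 0 ≤ E (star M * M))
include hE

lemma apply_le_apply_one (hX : IsBinaryObservable X) : E X ≤ E 1 := by
  have h := hE (1 + -X)
  rw [hX.neg.star_one_add_mul_self, map_nsmul, map_add, map_neg, nsmul_eq_mul,
    Nat.cast_ofNat] at h
  linarith

lemma apply_one_add_mul_one_add_nonneg (hX : IsBinaryObservable X)
    (hY : IsBinaryObservable Y) (hXY : Commute X Y) : 0 ≤ E ((1 + X) * (1 + Y)) := by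
  have h := hE ((1 + X) * (1 + Y))
  rw [hX.star_mul_self_one_add_mul_one_add hY hXY, map_nsmul, nsmul_eq_mul,
    Nat.cast_ofNat] at h
  linarith

variable {X₀ X₁ Y₀ Y₁ : R} (hX₀ : IsBinaryObservable X₀) (hX₁ : IsBinaryObservable X₁)
  (hY₀ : IsBinaryObservable Y₀) (hY₁ : IsBinaryObservable Y₁)
  (h₀₀ : Commute X₀ Y₀) (h₀₁ : Commute X₀ Y₁) (h₁₀ : Commute X₁ Y₀) (h₁₁ : Commute X₁ Y₁)
include hX₀ hX₁ hY₀ hY₁ h₀₀ h₀₁ h₁₀ h₁₁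

lemma apply_chsh_add_two_mul_le : E (chsh X₀ X₁ Y₀ Y₁) + 2 * E X₀ ≤ 4 * E 1 := by
  have hsos : (1 + -X₀) * (1 + Y₀) + (1 + -X₀) * (1 + Y₁) + (1 + X₁) * (1 + -Y₀)
      + (1 + -X₁) * (1 + -Y₁) = 4 • 1 - 2 • X₀ - chsh X₀ X₁ Y₀ Y₁ := by
    rw [chsh]; noncomm_ring
  have h := congrArg E hsos
  rw [map_add, map_add, map_add, map_sub, map_sub, map_nsmul, map_nsmul] at h
  simp only [nsmul_eq_mul, Nat.cast_ofNat] at h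
  have := apply_one_add_mul_one_add_nonneg E hE hX₀.neg hY₀ h₀₀.neg_left
  have := apply_one_add_mul_one_add_nonneg E hE hX₀.neg hY₁ h₀₁.neg_left
  have := apply_one_add_mul_one_add_nonneg E hE hX₁ hY₀.neg h₁₀.neg_right
  have := apply_one_add_mul_one_add_nonneg E hE hX₁.neg hY₁.neg h₁₁.neg_left.neg_right
  linarith

lemma apply_chsh_add_two_mul_le' : E (chsh X₀ X₁ Y₀ Y₁) + 2 * E Y₀ ≤ 4 * E 1 := by
  rw [chsh_comm h₀₀ h₀₁ h₁₀ h₁₁]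
  exact apply_chsh_add_two_mul_le E hE hY₀ hY₁ hX₀ hX₁ h₀₀.symm h₁₀.symm h₀₁.symm h₁₁.symm

lemma apply_chsh_add_mul_add_mul_le (hE₁ : E 1 = 1) {αA αB : ℝ} (hαA : 0 ≤ αA) (hαB : 0 ≤ αB)
    (hsum : 2 ≤ αA + αB) :
    E (chsh X₀ X₁ Y₀ Y₁) + αA * E X₀ + αB * E Y₀ ≤ 2 + αA + αB := by
  have hX := apply_chsh_add_two_mul_le E hE hX₀ hX₁ hY₀ hY₁ h₀₀ h₀₁ h₁₀ h₁₁
  have hY := apply_chsh_add_two_mul_le' E hE hX₀ hX₁ hY₀ hY₁ h₀₀ h₀₁ h₁₀ h₁₁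
  have ha := apply_le_apply_one E hE hX₀
  have hb := apply_le_apply_one E hE hY₀
  rw [hE₁] at hX hY ha hb
  exact add_mul_add_mul_le_two_add_add hαA hαB hsum (by linarith) (by linarith) ha hb

end StarRing

namespace Matrix

variable {n : Type*} [Fintype n]

def expectation (ρ : Matrix n n ℂ) : Matrix n n ℂ →+ ℝ :=
  Complex.reAddGroupHom.comp ((traceAddMonoidHom n ℂ).comp (AddMonoidHom.mulLeft ρ))

lemma expectation_apply (ρ M : Matrix n n ℂ) : expectation ρ M = (ρ * M).trace.re := rfl

lemma expectation_one [DecidableEq n] {ρ : Matrix n n ℂ} (hρ : ρ.trace = 1) :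
    expectation ρ 1 = 1 := by
  rw [expectation_apply, mul_one, hρ, Complex.one_re]

lemma PosSemidef.expectation_star_mul_self_nonneg [DecidableEq n] {ρ : Matrix n n ℂ}
    (hρ : ρ.PosSemidef) (M : Matrix n n ℂ) : 0 ≤ expectation ρ (star M * M) := by
  rw [expectation_apply, star_eq_conjTranspose, ← mul_assoc, trace_mul_comm, ← mul_assoc]
  exact (Complex.nonneg_iff.mp (hρ.mul_mul_conjTranspose_same M).trace_nonneg).1

variable {l m p α : Type*} [Fintype m] [DecidableEq m] [DecidableEq n]

lemma kronecker_one_mul_one_kronecker [CommSemiring α] (A : Matrix l m α) (B : Matrix n p α) :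
    (A ⊗ₖ (1 : Matrix n n α)) * ((1 : Matrix m m α) ⊗ₖ B) = A ⊗ₖ B := by
  rw [← mul_kronecker_mul, Matrix.mul_one, Matrix.one_mul]

lemma commute_kronecker_one_one_kronecker [CommSemiring α] (A : Matrix m m α)
    (B : Matrix n n α) : Commute (A ⊗ₖ (1 : Matrix n n α)) ((1 : Matrix m m α) ⊗ₖ B) := by
  rw [Commute, SemiconjBy, kronecker_one_mul_one_kronecker, ← mul_kronecker_mul,
    Matrix.mul_one, Matrix.one_mul]

end Matrix

section Kronecker

variable {m n α : Type*} [Fintype m] [Fintype n] [DecidableEq m] [DecidableEq n]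
  [CommRing α] [StarRing α]

lemma IsBinaryObservable.kronecker {A : Matrix m m α} {B : Matrix n n α}
    (hA : IsBinaryObservable A) (hB : IsBinaryObservable B) : IsBinaryObservable (A ⊗ₖ B) where
  isSelfAdjoint := by
    rw [IsSelfAdjoint, star_eq_conjTranspose, conjTranspose_kronecker,
      ← star_eq_conjTranspose, ← star_eq_conjTranspose, hA.isSelfAdjoint, hB.isSelfAdjoint]
  mul_self := by rw [← mul_kronecker_mul, hA.mul_self, hB.mul_self, one_kronecker_one]

lemma IsBinaryObservable.matrix_one : IsBinaryObservable (1 : Matrix n n α) :=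
  ⟨IsSelfAdjoint.one _, Matrix.one_mul 1⟩

end Kronecker

/-- the doubly tilted CHSH functional cannot exceed the local
bound when α_A + α_B ≥ 2. -/
theorem tilted_chsh_no_quantum_advantage (dA dB : ℕ) (αA αB : ℝ)
    (hαA : 0 ≤ αA) (hαB : 0 ≤ αB) (hsum : 2 ≤ αA + αB)
    (ρ : Matrix (Fin dA × Fin dB) (Fin dA × Fin dB) ℂ)
    (hρ : ρ.PosSemidef) (hρtr : ρ.trace = 1)
    (A₀ A₁ : Matrix (Fin dA) (Fin dA) ℂ)
    (B₀ B₁ : Matrix (Fin dB) (Fin dB) ℂ)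
    (hA₀ : A₀.IsHermitian) (hA₁ : A₁.IsHermitian)
    (hA₀2 : A₀ * A₀ = 1) (hA₁2 : A₁ * A₁ = 1)
    (hB₀ : B₀.IsHermitian) (hB₁ : B₁.IsHermitian)
    (hB₀2 : B₀ * B₀ = 1) (hB₁2 : B₁ * B₁ = 1) :
    ((ρ * (A₀ ⊗ₖ B₀ + A₀ ⊗ₖ B₁ + A₁ ⊗ₖ B₀ - A₁ ⊗ₖ B₁)).trace).re
      + αA * ((ρ * (A₀ ⊗ₖ (1 : Matrix (Fin dB) (Fin dB) ℂ))).trace).re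
      + αB * ((ρ * ((1 : Matrix (Fin dA) (Fin dA) ℂ) ⊗ₖ B₀)).trace).re
      ≤ 2 + αA + αB := by
  have hX (A : Matrix (Fin dA) (Fin dA) ℂ) (hA : A.IsHermitian) (hA2 : A * A = 1) :
      IsBinaryObservable (A ⊗ₖ (1 : Matrix (Fin dB) (Fin dB) ℂ)) :=
    IsBinaryObservable.kronecker ⟨hA, hA2⟩ .matrix_one
  have hY (B : Matrix (Fin dB) (Fin dB) ℂ) (hB : B.IsHermitian) (hB2 : B * B = 1) :
      IsBinaryObservable ((1 : Matrix (Fin dA) (Fin dA) ℂ) ⊗ₖ B) :=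
    IsBinaryObservable.matrix_one.kronecker ⟨hB, hB2⟩
  have key := apply_chsh_add_mul_add_mul_le (expectation ρ) hρ.expectation_star_mul_self_nonneg
    (hX A₀ hA₀ hA₀2) (hX A₁ hA₁ hA₁2) (hY B₀ hB₀ hB₀2) (hY B₁ hB₁ hB₁2)
    (commute_kronecker_one_one_kronecker _ _) (commute_kronecker_one_one_kronecker _ _)
    (commute_kronecker_one_one_kronecker _ _) (commute_kronecker_one_one_kronecker _ _)
    (expectation_one hρtr) hαA hαB hsum
  simpa only [chsh, kronecker_one_mul_one_kronecker, expectation_apply] using key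
end
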